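/- arXiv:2109.01022 — 3 statements merged into one kernel-verified Lean document; each statement's English description precedes it below -/
import Mathlib

section
/- Let s, s′ ∈ ℝ² be unit vectors with s′ ≠ s and s′ ≠ −s. Then for every F ∈ ℝ^{2×2} with det F = 1 there exist matrices F₊, F₋ ∈ 𝓝_s ∪ 𝓝_{s′} and λ ∈ [0,1] such that F = λ F₊ + (1−λ) F₋ and F₊ − F₋ has rank at most one. -/
/-!
Since `|det F| = 1`, the smaller singular value of `F` is at most one, so `‖F w‖ ≤ ‖w‖` for some
`w ≠ 0`. Up to replacing `w` by `-w` and `s'` by `-s'` (which changes neither hypothesis nor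
`𝓝_{s'}`), `w = α s + β s'` with `α, β ≥ 0`, so `p = w / (α + β)` lies on the segment `[s, s']`
and `‖F p‖ ≤ 1` by the triangle inequality. The rank-one perturbations
`F + τ F (s - s') ⊗ (s - s')^⊥` keep the determinant and move `F s` and `F s'` along `F (s - s')`;
for suitable `τ₊, τ₋` they send `s'`, resp. `s`, to `F p`, and `F` lies on the segment between them.
-/

open Matrix Real Set MeasureTheory

noncomputable section

/-- The space of real 2×2 matrices. -/
abbrev M2 : Type := Matrix (Fin 2) (Fin 2) ℝ

/-- Euclidean norm on ℝ². -/
def enorm2 (v : Fin 2 → ℝ) : ℝ := Real.sqrt ((v 0) ^ 2 + (v 1) ^ 2)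

/-- Rotation matrix by angle θ. -/
def rot (θ : ℝ) : M2 := !![Real.cos θ, -Real.sin θ; Real.sin θ, Real.cos θ]

/-- The set of rotations SO(2). -/
def SO2 : Set M2 := {R : M2 | ∃ θ : ℝ, R = rot θ}

def e1 : Fin 2 → ℝ := ![1, 0]
def e2 : Fin 2 → ℝ := ![0, 1]

/-- Perpendicular vector w⊥ = (−w₂, w₁). -/
def perp (w : Fin 2 → ℝ) : Fin 2 → ℝ := ![-(w 1), w 0]

/-- 𝓜_s = {F : det F = 1 and ‖F s‖ = 1}. -/
def calM (s : Fin 2 → ℝ) : Set M2 := {F : M2 | F.det = 1 ∧ enorm2 (F.mulVec s) = 1}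

/-- 𝓝_s = {F : det F = 1 and ‖F s‖ ≤ 1}. -/
def calN (s : Fin 2 → ℝ) : Set M2 := {F : M2 | F.det = 1 ∧ enorm2 (F.mulVec s) ≤ 1}

lemma enorm2_eq_norm (v : Fin 2 → ℝ) :
    enorm2 v = ‖(WithLp.toLp 2 v : EuclideanSpace ℝ (Fin 2))‖ := by
  simp [enorm2, EuclideanSpace.norm_eq, Fin.sum_univ_two]

lemma enorm2_add_le (v w : Fin 2 → ℝ) : enorm2 (v + w) ≤ enorm2 v + enorm2 w := by
  simpa only [enorm2_eq_norm, WithLp.toLp_add] using norm_add_le _ _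

lemma enorm2_smul (c : ℝ) (v : Fin 2 → ℝ) : enorm2 (c • v) = |c| * enorm2 v := by
  simp only [enorm2_eq_norm, WithLp.toLp_smul, norm_smul, Real.norm_eq_abs]

lemma enorm2_neg (v : Fin 2 → ℝ) : enorm2 (-v) = enorm2 v := by
  simp only [enorm2_eq_norm, WithLp.toLp_neg, norm_neg]

lemma calN_neg (s : Fin 2 → ℝ) : calN (-s) = calN s := by
  simp only [calN, Matrix.mulVec_neg, enorm2_neg]

lemma perp_dotProduct (v w : Fin 2 → ℝ) : perp v ⬝ᵥ w = v 0 * w 1 - v 1 * w 0 := by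
  simp only [dotProduct, perp, Fin.sum_univ_two, cons_val_zero, cons_val_one, cons_val_fin_one]
  ring

lemma enorm2_eq_one_iff (v : Fin 2 → ℝ) : enorm2 v = 1 ↔ v 0 ^ 2 + v 1 ^ 2 = 1 :=
  Real.sqrt_eq_one

lemma perp_dotProduct_ne_zero {s t : Fin 2 → ℝ} (hs : enorm2 s = 1) (ht : enorm2 t = 1)
    (hts : t ≠ s) (hts' : t ≠ -s) : perp s ⬝ᵥ t ≠ 0 := by
  intro hst
  rw [perp_dotProduct] at hst
  have hs2 := (enorm2_eq_one_iff s).1 hs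
  have ht_eq : t = (s ⬝ᵥ t) • s := by
    ext i; fin_cases i <;>
      simp only [Fin.zero_eta, Fin.mk_one, Fin.isValue, dotProduct, Fin.sum_univ_two, Pi.smul_apply,
        smul_eq_mul]
    · linear_combination (-s 1) * hst - t 0 * hs2
    · linear_combination s 0 * hst - t 1 * hs2
  have hd : |s ⬝ᵥ t| = 1 := by
    simpa [enorm2_smul, ht, hs] using (congrArg enorm2 ht_eq).symm
  rcases (abs_eq zero_le_one).1 hd with h | h
  · exact hts (by rw [ht_eq, h, one_smul])
  · exact hts' (by rw [ht_eq, h, neg_one_smul])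

lemma exists_eq_smul_add_smul {s t : Fin 2 → ℝ} (hst : perp s ⬝ᵥ t ≠ 0) (w : Fin 2 → ℝ) :
    ∃ α β : ℝ, w = α • s + β • t := by
  have cramer : (perp s ⬝ᵥ t) • w = (perp w ⬝ᵥ t) • s + (perp s ⬝ᵥ w) • t := by
    simp only [perp_dotProduct]
    ext i; fin_cases i <;>
      simp only [Fin.zero_eta, Fin.mk_one, Pi.smul_apply, smul_eq_mul, Pi.add_apply] <;> ring
  refine ⟨(perp s ⬝ᵥ t)⁻¹ * perp w ⬝ᵥ t, (perp s ⬝ᵥ t)⁻¹ * perp s ⬝ᵥ w, ?_⟩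
  rw [← smul_smul, ← smul_smul, ← smul_add, ← cramer, inv_smul_smul₀ hst]

lemma exists_ne_zero_enorm2_mulVec_le {F : M2} (hF : |F.det| ≤ 1) :
    ∃ w ≠ 0, enorm2 (F *ᵥ w) ≤ enorm2 w := by
  rw [det_fin_two] at hF
  set A := F 0 0 ^ 2 + F 1 0 ^ 2
  set B := F 0 0 * F 0 1 + F 1 0 * F 1 1
  set C := F 0 1 ^ 2 + F 1 1 ^ 2
  set d := F 0 0 * F 1 1 - F 0 1 * F 1 0
  by_cases hA : A ≤ 1
  · refine ⟨![1, 0], by simp, Real.sqrt_le_sqrt ?_⟩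
    simpa using hA
  -- `w = (-B, A - 1)` gives `‖F w‖² - ‖w‖² = (A - 1) (1 + d² - A - C)`, where `A C - B² = d²`.
  have hd : d ^ 2 ≤ 1 := sq_le_one_iff_abs_le_one d |>.2 hF
  have hAC : A * C - B ^ 2 = d ^ 2 := by ring
  have htrace : 1 + d ^ 2 ≤ A + C := by
    by_cases hC : C ≤ 1
    · nlinarith
    · linarith
  have hw : ![-B, A - 1] ≠ 0 := fun h ↦ by
    have h1 := congrFun h 1
    simp only [cons_val_one, cons_val_fin_one, Pi.zero_apply] at h1
    linarith
  refine ⟨![-B, A - 1], hw, Real.sqrt_le_sqrt ?_⟩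
  have hexcess : (-(F 0 0 * B) + F 0 1 * (A - 1)) ^ 2 + (-(F 1 0 * B) + F 1 1 * (A - 1)) ^ 2 -
      (B ^ 2 + (A - 1) ^ 2) = (A - 1) * (1 + d ^ 2 - A - C) := by ring
  simp only [Fin.isValue, mulVec_fin_two, cons_val_zero, cons_val_one, cons_val_fin_one, mul_neg,
    even_two, Even.neg_pow]
  nlinarith [mul_nonneg (sub_nonneg.2 (not_le.1 hA).le) (sub_nonneg.2 htrace)]

lemma det_add_smul_vecMulVec_perp (F : M2) (v : Fin 2 → ℝ) (τ : ℝ) :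
    (F + τ • vecMulVec (F *ᵥ v) (perp v)).det = F.det := by
  simp only [det_fin_two, Matrix.add_apply, Matrix.smul_apply, vecMulVec_apply, perp,
    mulVec_fin_two, cons_val_zero, cons_val_one, cons_val_fin_one, smul_eq_mul]
  ring

lemma add_smul_vecMulVec_mulVec {R n : Type*} [CommRing R] [Fintype n] (F : Matrix n n R)
    (u m x : n → R) (τ : R) :
    (F + τ • vecMulVec (F *ᵥ u) m) *ᵥ x = F *ᵥ (x + (τ * (m ⬝ᵥ x)) • u) := by
  rw [add_mulVec, smul_mulVec, vecMulVec_mulVec, mulVec_add, mulVec_smul]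
  simp [smul_smul]

def firstLamination (K : Set M2) : Set M2 :=
  {F | ∃ Fp Fm : M2, Fp ∈ K ∧ Fm ∈ K ∧ ∃ lam : ℝ, 0 ≤ lam ∧ lam ≤ 1 ∧
    F = lam • Fp + (1 - lam) • Fm ∧ (Fp - Fm).rank ≤ 1}

lemma mem_firstLamination_of_segment {F : M2} (hF : F.det = 1) {s t : Fin 2 → ℝ}
    (hst : perp s ⬝ᵥ t ≠ 0) {a b : ℝ} (ha : 0 ≤ a) (hb : 0 ≤ b) (hab : a + b = 1)
    (hp : enorm2 (F *ᵥ (a • s + b • t)) ≤ 1) : F ∈ firstLamination (calN s ∪ calN t) := by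
  obtain rfl : a = 1 - b := by linarith
  set k := perp s ⬝ᵥ t
  have hks : perp (s - t) ⬝ᵥ s = k := by simp only [k, perp_dotProduct, Pi.sub_apply]; ring
  have hkt : perp (s - t) ⬝ᵥ t = k := by simp only [k, perp_dotProduct, Pi.sub_apply]; ring
  set R := vecMulVec (F *ᵥ (s - t)) (perp (s - t))
  have hFp : (F + ((1 - b) / k) • R) *ᵥ t = F *ᵥ ((1 - b) • s + b • t) := by
    rw [add_smul_vecMulVec_mulVec, hkt, div_mul_cancel₀ _ hst]
    congr 1; module
  have hFm : (F + (-b / k) • R) *ᵥ s = F *ᵥ ((1 - b) • s + b • t) := by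
    rw [add_smul_vecMulVec_mulVec, hks, div_mul_cancel₀ _ hst]
    congr 1; module
  refine ⟨F + ((1 - b) / k) • R, F + (-b / k) • R,
    Or.inr ⟨by rw [det_add_smul_vecMulVec_perp, hF], hFp ▸ hp⟩,
    Or.inl ⟨by rw [det_add_smul_vecMulVec_perp, hF], hFm ▸ hp⟩, b, hb, by linarith, ?_, ?_⟩
  · module
  · have hdiff : F + ((1 - b) / k) • R - (F + (-b / k) • R) =
        vecMulVec ((1 / k) • F *ᵥ (s - t)) (perp (s - t)) := by
      rw [smul_vecMulVec]; module
    rw [hdiff]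
    exact rank_vecMulVec_le _ _

lemma mem_firstLamination_of_nonneg {F : M2} (hF : F.det = 1) {s t : Fin 2 → ℝ}
    (hs : enorm2 s = 1) (ht : enorm2 t = 1) (hst : perp s ⬝ᵥ t ≠ 0) {w : Fin 2 → ℝ}
    (hw : w ≠ 0) (hFw : enorm2 (F *ᵥ w) ≤ enorm2 w) {α β : ℝ} (hα : 0 ≤ α) (hβ : 0 ≤ β)
    (hwst : w = α • s + β • t) : F ∈ firstLamination (calN s ∪ calN t) := by
  have hαβ : 0 < α + β := by
    refine (add_nonneg hα hβ).lt_of_ne fun h ↦ hw ?_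
    obtain ⟨rfl, rfl⟩ := (add_eq_zero_iff_of_nonneg hα hβ).1 h.symm
    simp [hwst]
  refine mem_firstLamination_of_segment hF hst (div_nonneg hα hαβ.le) (div_nonneg hβ hαβ.le)
    (by field_simp) ?_
  have hp : (α / (α + β)) • s + (β / (α + β)) • t = (α + β)⁻¹ • w := by
    rw [hwst]; module
  rw [hp, mulVec_smul, enorm2_smul, abs_inv, abs_of_pos hαβ, inv_mul_le_one₀ hαβ]
  calc enorm2 (F *ᵥ w) ≤ enorm2 w := hFw
    _ ≤ enorm2 (α • s) + enorm2 (β • t) := hwst ▸ enorm2_add_le _ _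
    _ = α + β := by rw [enorm2_smul, enorm2_smul, hs, ht, abs_of_nonneg hα, abs_of_nonneg hβ,
      mul_one, mul_one]

lemma mem_firstLamination_of_enorm2_mulVec_le {F : M2} (hF : F.det = 1) {s t : Fin 2 → ℝ}
    (hs : enorm2 s = 1) (ht : enorm2 t = 1) (hst : perp s ⬝ᵥ t ≠ 0) {w : Fin 2 → ℝ}
    (hw : w ≠ 0) (hFw : enorm2 (F *ᵥ w) ≤ enorm2 w) :
    F ∈ firstLamination (calN s ∪ calN t) := by
  obtain ⟨α, β, hwst⟩ := exists_eq_smul_add_smul hst w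
  have hw' : -w ≠ 0 := neg_ne_zero.2 hw
  have hFw' : enorm2 (F *ᵥ -w) ≤ enorm2 (-w) := by rwa [mulVec_neg, enorm2_neg, enorm2_neg]
  have ht' : enorm2 (-t) = 1 := by rwa [enorm2_neg]
  have hst' : perp s ⬝ᵥ -t ≠ 0 := by rwa [dotProduct_neg, neg_ne_zero]
  rcases le_total 0 α with hα | hα <;> rcases le_total 0 β with hβ | hβ
  · exact mem_firstLamination_of_nonneg hF hs ht hst hw hFw hα hβ hwst
  · rw [← calN_neg t]
    exact mem_firstLamination_of_nonneg hF hs ht' hst' hw hFw hα (neg_nonneg.2 hβ)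
      (by rw [hwst]; module)
  · rw [← calN_neg t]
    exact mem_firstLamination_of_nonneg hF hs ht' hst' hw' hFw' (neg_nonneg.2 hα) hβ
      (by rw [hwst]; module)
  · exact mem_firstLamination_of_nonneg hF hs ht hst hw' hFw' (neg_nonneg.2 hα)
      (neg_nonneg.2 hβ) (by rw [hwst]; module)

/-- Every F with det F = 1 is a convex combination of two rank-one connected
matrices F₊, F₋ ∈ 𝓝_s ∪ 𝓝_{s′}. -/
theorem stmt6 (s s' : Fin 2 → ℝ) (hs : enorm2 s = 1) (hs' : enorm2 s' = 1)
    (h1 : s' ≠ s) (h2 : s' ≠ -s) (F : M2) (hF : F.det = 1) :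
    ∃ Fp Fm : M2, Fp ∈ calN s ∪ calN s' ∧ Fm ∈ calN s ∪ calN s' ∧
      ∃ lam : ℝ, 0 ≤ lam ∧ lam ≤ 1 ∧ F = lam • Fp + (1 - lam) • Fm ∧
        (Fp - Fm).rank ≤ 1 := by
  obtain ⟨w, hw, hFw⟩ := exists_ne_zero_enorm2_mulVec_le (F := F) (by rw [hF, abs_one])
  exact mem_firstLamination_of_enorm2_mulVec_le hF hs hs' (perp_dotProduct_ne_zero hs hs' h1 h2)
    hw hFw
end
end

section
/- For all real angles θ̃, θ with 0 < θ̃ < θ ≤ π/2, the set 𝓝 ∩ {F ∈ ℝ^{2×2} : F R_θ ∈ 𝓝} is a proper subset of 𝓝 ∩ {F ∈ ℝ^{2×2} : F R_{θ̃} ∈ 𝓝}. -/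
open Matrix Real Set MeasureTheory

noncomputable section

/-! Write `w φ := F R_φ e₁ = cos φ • u + sin φ • v` for the columns `u, v` of `F`, so that
`det ![u, v] = 1`. The identity `sin θ • R_t = sin (θ - t) • 1 + sin t • R_θ` gives
`sin θ • w t = sin (θ - t) • w 0 + sin t • w θ`. As `det ![w 0, w θ] = sin θ`, Lagrange's identity
`⟨x, y⟩² + det ![x, y]² = ‖x‖² ‖y‖²` shows that two vectors of length at most one spanning this
area make an angle of at least `θ`, i.e. `⟨w 0, w θ⟩ ≤ cos θ`; expanding the square then bounds
`sin² θ ‖w t‖²` by `sin² (θ - t) + sin² t + 2 sin (θ - t) sin t cos θ = sin² θ`.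
For strictness, the shear fixing `e₁` that reflects `R_t e₁` to `(-cos t, sin t)` lies in the
larger set but not in the smaller one. -/

lemma enorm2_le_one_iff (v : Fin 2 → ℝ) : enorm2 v ≤ 1 ↔ v ⬝ᵥ v ≤ 1 := by
  rw [enorm2, Real.sqrt_le_one, dotProduct, Fin.sum_univ_two, sq, sq]

lemma mem_calN_iff {s : Fin 2 → ℝ} {F : M2} :
    F ∈ calN s ↔ F.det = 1 ∧ F *ᵥ s ⬝ᵥ F *ᵥ s ≤ 1 :=
  and_congr_right' (enorm2_le_one_iff _)

lemma det_rot (θ : ℝ) : (rot θ).det = 1 := by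
  rw [rot, det_fin_two_of]
  linear_combination sin_sq_add_cos_sq θ

lemma sin_smul_rot (t θ : ℝ) : sin θ • rot t = sin (θ - t) • (1 : M2) + sin t • rot θ := by
  rw [sin_sub]
  ext i j
  fin_cases i <;> fin_cases j <;> simp [rot] <;> ring

lemma sin_sub_sq_add_sin_sq_add_mul_cos (t θ : ℝ) :
    sin (θ - t) ^ 2 + sin t ^ 2 + 2 * sin (θ - t) * sin t * cos θ = sin θ ^ 2 := by
  rw [sin_sub]
  linear_combination sin θ ^ 2 * sin_sq_add_cos_sq t - sin t ^ 2 * sin_sq_add_cos_sq θ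

lemma det_of_mulVec_e1_mul_rot (F : M2) (θ : ℝ) :
    (of ![F *ᵥ e1, (F * rot θ) *ᵥ e1]).det = sin θ * F.det := by
  simp [det_fin_two, Fin.sum_univ_two, mul_apply, rot, e1]
  ring

lemma dotProduct_sq_add_det_sq (x y : Fin 2 → ℝ) :
    (x ⬝ᵥ y) ^ 2 + (of ![x, y]).det ^ 2 = (x ⬝ᵥ x) * (y ⬝ᵥ y) := by
  simp [dotProduct, Fin.sum_univ_two, det_fin_two]
  ring

section UnitDisc

variable {θ : ℝ} {x y : Fin 2 → ℝ}

lemma dotProduct_le_cos_of_det_eq_sin (hcos : 0 ≤ cos θ) (hx : x ⬝ᵥ x ≤ 1) (hy : y ⬝ᵥ y ≤ 1)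
    (hxy : (of ![x, y]).det = sin θ) : x ⬝ᵥ y ≤ cos θ := by
  have hy₀ : 0 ≤ y ⬝ᵥ y := by simpa using dotProduct_star_self_nonneg y
  have hlagrange := dotProduct_sq_add_det_sq x y
  have hsq : (x ⬝ᵥ y) ^ 2 ≤ cos θ ^ 2 := by
    rw [hxy] at hlagrange
    nlinarith [mul_le_one₀ hx hy₀ hy, sin_sq_add_cos_sq θ]
  exact (abs_le_of_sq_le_sq' hsq hcos).2

lemma dotProduct_self_smul_add_smul_le {α β : ℝ} (hcos : 0 ≤ cos θ) (hα : 0 ≤ α) (hβ : 0 ≤ β)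
    (hx : x ⬝ᵥ x ≤ 1) (hy : y ⬝ᵥ y ≤ 1) (hxy : (of ![x, y]).det = sin θ) :
    (α • x + β • y) ⬝ᵥ (α • x + β • y) ≤ α ^ 2 + β ^ 2 + 2 * α * β * cos θ := by
  have hcross := dotProduct_le_cos_of_det_eq_sin hcos hx hy hxy
  calc (α • x + β • y) ⬝ᵥ (α • x + β • y)
      = α ^ 2 * (x ⬝ᵥ x) + β ^ 2 * (y ⬝ᵥ y) + 2 * α * β * (x ⬝ᵥ y) := by
        simp only [add_dotProduct, dotProduct_add, smul_dotProduct, dotProduct_smul,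
          dotProduct_comm y x, smul_eq_mul]
        ring
    _ ≤ α ^ 2 * 1 + β ^ 2 * 1 + 2 * α * β * cos θ := by gcongr
    _ = α ^ 2 + β ^ 2 + 2 * α * β * cos θ := by ring

end UnitDisc

lemma mul_rot_mem_calN_of_mem {F : M2} {t θ : ℝ} (ht : 0 ≤ sin t) (htθ : 0 ≤ sin (θ - t))
    (hsin : 0 < sin θ) (hcos : 0 ≤ cos θ) (hF : F ∈ calN e1) (hFθ : F * rot θ ∈ calN e1) :
    F * rot t ∈ calN e1 := by
  rw [mem_calN_iff] at hF hFθ ⊢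
  refine ⟨by rw [det_mul, det_rot, mul_one, hF.1], ?_⟩
  have hcomb : sin θ • (F * rot t) *ᵥ e1
      = sin (θ - t) • F *ᵥ e1 + sin t • (F * rot θ) *ᵥ e1 := by
    rw [← smul_mulVec, ← Matrix.mul_smul, sin_smul_rot, Matrix.mul_add, Matrix.mul_smul,
      Matrix.mul_smul, mul_one, add_mulVec, smul_mulVec, smul_mulVec]
  have hdet : (of ![F *ᵥ e1, (F * rot θ) *ᵥ e1]).det = sin θ := by
    rw [det_of_mulVec_e1_mul_rot, hF.1, mul_one]
  have hbound := dotProduct_self_smul_add_smul_le hcos htθ ht hF.2 hFθ.2 hdet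
  rw [← hcomb, sin_sub_sq_add_sin_sq_add_mul_cos, smul_dotProduct, dotProduct_smul,
    smul_eq_mul, smul_eq_mul, ← mul_assoc, ← sq] at hbound
  exact le_of_mul_le_mul_left (by rwa [mul_one]) (by positivity)

def shear (k : ℝ) : M2 := !![1, k; 0, 1]

lemma shear_mem_calN (k : ℝ) : shear k ∈ calN e1 := by
  simp [mem_calN_iff, shear, det_fin_two_of, mulVec, dotProduct, Fin.sum_univ_two, e1]

lemma shear_mul_rot_mem_calN_iff {k φ : ℝ} :
    shear k * rot φ ∈ calN e1 ↔ (cos φ + k * sin φ) ^ 2 + sin φ ^ 2 ≤ 1 := by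
  rw [mem_calN_iff, det_mul, det_rot, mul_one]
  simp [shear, det_fin_two_of, mulVec, dotProduct, Fin.sum_univ_two, mul_apply, rot, e1, sq]

lemma shear_mul_rot_mem_calN {t : ℝ} (ht : sin t ≠ 0) :
    shear (-2 * cos t / sin t) * rot t ∈ calN e1 := by
  rw [shear_mul_rot_mem_calN_iff, div_mul_cancel₀ _ ht]
  linarith [sin_sq_add_cos_sq t]

lemma shear_mul_rot_notMem_calN {t θ : ℝ} (ht : 0 < sin t) (hct : 0 < cos t) (hsin : 0 < sin θ)
    (htθ : 0 < sin (θ - t)) : shear (-2 * cos t / sin t) * rot θ ∉ calN e1 := by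
  rw [shear_mul_rot_mem_calN_iff, not_le]
  set u := cos θ + -2 * cos t / sin t * sin θ with hu_def
  have hu : sin t * u = -(sin (θ - t) + cos t * sin θ) := by
    rw [hu_def, sin_sub]
    field_simp
    ring
  have hpos : 0 < sin t ^ 2 * (u ^ 2 - cos θ ^ 2) := by
    have hfactor : sin t ^ 2 * (u ^ 2 - cos θ ^ 2)
        = 4 * sin (θ - t) * (cos t * sin θ) := by
      rw [show sin t ^ 2 * (u ^ 2 - cos θ ^ 2) = (sin t * u) ^ 2 - (sin t * cos θ) ^ 2 by ring,
        hu, sin_sub]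
      ring
    rw [hfactor]
    positivity
  have hu2 : cos θ ^ 2 < u ^ 2 := by nlinarith [(mul_pos_iff_of_pos_left (by positivity)).1 hpos]
  linarith [sin_sq_add_cos_sq θ]

/-- The sets 𝓝 ∩ 𝓝 R_θᵀ are strictly decreasing in θ on (0, π/2]. -/
theorem stmt8 (θt θ : ℝ) (h1 : 0 < θt) (h2 : θt < θ) (h3 : θ ≤ Real.pi / 2) :
    (calN e1 ∩ {F : M2 | F * rot θ ∈ calN e1}) ⊂
      (calN e1 ∩ {F : M2 | F * rot θt ∈ calN e1}) := by
  have hpi : π / 2 < π := by linarith [pi_pos]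
  have hsin_t : 0 < sin θt := sin_pos_of_pos_of_lt_pi h1 (by linarith)
  have hcos_t : 0 < cos θt := cos_pos_of_mem_Ioo ⟨by linarith, by linarith⟩
  have hsin : 0 < sin θ := sin_pos_of_pos_of_lt_pi (by linarith) (by linarith)
  have hcos : 0 ≤ cos θ := cos_nonneg_of_mem_Icc ⟨by linarith, h3⟩
  have hsin_sub : 0 < sin (θ - θt) := sin_pos_of_pos_of_lt_pi (by linarith) (by linarith)
  have hsubset : calN e1 ∩ {F : M2 | F * rot θ ∈ calN e1} ⊆
      calN e1 ∩ {F : M2 | F * rot θt ∈ calN e1} := fun F ⟨hF, hFθ⟩ =>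
    ⟨hF, mul_rot_mem_calN_of_mem hsin_t.le hsin_sub.le hsin hcos hF hFθ⟩
  rw [ssubset_iff_of_subset hsubset]
  exact ⟨shear (-2 * cos θt / sin θt), ⟨shear_mem_calN _, shear_mul_rot_mem_calN hsin_t.ne'⟩,
    fun h => shear_mul_rot_notMem_calN hsin_t hcos_t hsin hsin_sub h.2⟩
end
end

section
/- Let s ∈ ℝ² be a unit vector. Then the closure of the convex hull of 𝓜_s (in ℝ^{2×2}) equals {F ∈ ℝ^{2×2} : ‖F s‖ ≤ 1}. -/
/-!
For a unit vector `s`, every matrix is `F = w ⊗ s + z ⊗ s⊥` with `w = F s`, `z = F s⊥`, and then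
`det F = w ∧ z`. So `𝓜_s` corresponds to the pairs `(w, z)` with `‖w‖ = 1` and `w ∧ z = 1`, which
contain the lines `(±u, ±u⊥ + r u)` for unit `u`. Their midpoints give `(0, r u)`, hence every
`(0, z)`, and `(a u, z)` with `0 ≤ a < 1` is a convex combination of `(u, u⊥)` and some `(0, z')`.
Thus the convex hull of `𝓜_s` contains `{‖F s‖ < 1}`, whose closure is `{‖F s‖ ≤ 1}`; conversely
`{‖F s‖ ≤ 1}` is closed, convex and contains `𝓜_s`.
-/

open Matrix Real Set MeasureTheory

noncomputable section

lemma enorm2_nonneg (v : Fin 2 → ℝ) : 0 ≤ enorm2 v := Real.sqrt_nonneg _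

lemma enorm2_sq (v : Fin 2 → ℝ) : enorm2 v ^ 2 = v 0 ^ 2 + v 1 ^ 2 :=
  Real.sq_sqrt (by positivity)

lemma sq_add_sq_of_enorm2_eq_one {s : Fin 2 → ℝ} (hs : enorm2 s = 1) : s 0 ^ 2 + s 1 ^ 2 = 1 := by
  rw [← enorm2_sq, hs, one_pow]

lemma exists_eq_smul_of_enorm2_lt_one {v : Fin 2 → ℝ} (hv : enorm2 v < 1) :
    ∃ a : ℝ, ∃ u, 0 ≤ a ∧ a < 1 ∧ enorm2 u = 1 ∧ v = a • u := by
  rcases eq_or_ne v 0 with rfl | hv0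
  · exact ⟨0, e1, le_rfl, one_pos, by simp [enorm2, e1], (zero_smul ℝ e1).symm⟩
  have ha : enorm2 v ≠ 0 := by
    rwa [enorm2_eq_norm, norm_ne_zero_iff, ne_eq, WithLp.toLp_eq_zero]
  refine ⟨enorm2 v, (enorm2 v)⁻¹ • v, enorm2_nonneg v, hv, ?_, ?_⟩
  · rw [enorm2_smul, abs_inv, abs_of_nonneg (enorm2_nonneg v), inv_mul_cancel₀ ha]
  · rw [smul_smul, mul_inv_cancel₀ ha, one_smul]

lemma perp_neg (u : Fin 2 → ℝ) : perp (-u) = -perp u := by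
  ext i; fin_cases i <;> simp [perp]

def wedge (w z : Fin 2 → ℝ) : ℝ := w 0 * z 1 - w 1 * z 0

lemma wedge_perp (u : Fin 2 → ℝ) : wedge u (perp u) = enorm2 u ^ 2 := by
  rw [enorm2_sq]
  simp only [wedge, perp, cons_val_zero, cons_val_one, cons_val_fin_one]
  ring

/-- Pairs `(F s, F s⊥)` of matrices `F ∈ 𝓜_s`. -/
def unitWedgePairs : Set ((Fin 2 → ℝ) × (Fin 2 → ℝ)) :=
  {p | enorm2 p.1 = 1 ∧ wedge p.1 p.2 = 1}

lemma mk_perp_add_smul_mem_unitWedgePairs {u : Fin 2 → ℝ} (hu : enorm2 u = 1) (r : ℝ) :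
    (u, perp u + r • u) ∈ unitWedgePairs := by
  refine ⟨hu, ?_⟩
  have h := wedge_perp u
  simp only [wedge, Pi.add_apply, Pi.smul_apply, smul_eq_mul] at h ⊢
  rw [hu] at h
  linear_combination h

lemma mk_zero_smul_mem_convexHull_unitWedgePairs {u : Fin 2 → ℝ} (hu : enorm2 u = 1) (r : ℝ) :
    ((0 : Fin 2 → ℝ), r • u) ∈ convexHull ℝ unitWedgePairs := by
  have hpos := mk_perp_add_smul_mem_unitWedgePairs hu r
  have hneg := mk_perp_add_smul_mem_unitWedgePairs (u := -u) (by rwa [enorm2_neg]) (-r)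
  rw [perp_neg, neg_smul_neg] at hneg
  refine segment_subset_convexHull hpos hneg
    ⟨1 / 2, 1 / 2, by norm_num, by norm_num, by norm_num, Prod.ext ?_ ?_⟩ <;>
  · simp only [Prod.fst_add, Prod.snd_add, Prod.smul_fst, Prod.smul_snd]
    module

lemma mk_zero_mem_convexHull_unitWedgePairs (z : Fin 2 → ℝ) :
    ((0 : Fin 2 → ℝ), z) ∈ convexHull ℝ unitWedgePairs := by
  have h1 := mk_zero_smul_mem_convexHull_unitWedgePairs (u := e1) (by simp [enorm2, e1]) (2 * z 0)
  have h2 := mk_zero_smul_mem_convexHull_unitWedgePairs (u := e2) (by simp [enorm2, e2]) (2 * z 1)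
  refine (convex_convexHull ℝ _).segment_subset h1 h2
    ⟨1 / 2, 1 / 2, by norm_num, by norm_num, by norm_num, Prod.ext (by simp) (funext fun i ↦ ?_)⟩
  fin_cases i <;> simp [e1, e2]

lemma mk_mem_convexHull_unitWedgePairs {w : Fin 2 → ℝ} (hw : enorm2 w < 1) (z : Fin 2 → ℝ) :
    (w, z) ∈ convexHull ℝ unitWedgePairs := by
  obtain ⟨a, u, ha0, ha1, hu, rfl⟩ := exists_eq_smul_of_enorm2_lt_one hw
  have hu' : (u, perp u) ∈ unitWedgePairs := by
    simpa using mk_perp_add_smul_mem_unitWedgePairs hu 0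
  have ha : 1 - a ≠ 0 := by linarith
  refine (convex_convexHull ℝ _).segment_subset (subset_convexHull ℝ _ hu')
    (mk_zero_mem_convexHull_unitWedgePairs ((1 - a)⁻¹ • (z - a • perp u)))
    ⟨a, 1 - a, ha0, sub_nonneg.2 ha1.le, add_sub_cancel a 1, Prod.ext (by simp) ?_⟩
  simp only [Prod.snd_add, Prod.smul_snd, smul_smul, mul_inv_cancel₀ ha, one_smul]
  abel

/-- The matrix `F` with `F s = w` and `F s⊥ = z`, for a unit vector `s`. -/
def frame (s : Fin 2 → ℝ) : (Fin 2 → ℝ) × (Fin 2 → ℝ) →ₗ[ℝ] M2 where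
  toFun p := vecMulVec p.1 s + vecMulVec p.2 (perp s)
  map_add' p q := by simp only [Prod.fst_add, Prod.snd_add, add_vecMulVec]; abel
  map_smul' c p := by simp [smul_vecMulVec]

lemma dotProduct_self_eq_one {s : Fin 2 → ℝ} (hs : enorm2 s = 1) : s ⬝ᵥ s = 1 := by
  rw [← sq_add_sq_of_enorm2_eq_one hs, dotProduct, Fin.sum_univ_two, sq, sq]

lemma perp_dotProduct_s13 (s : Fin 2 → ℝ) : perp s ⬝ᵥ s = 0 := by
  simp only [dotProduct, Fin.sum_univ_two, perp, cons_val_zero, cons_val_one, cons_val_fin_one]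
  ring

lemma frame_mulVec {s : Fin 2 → ℝ} (hs : enorm2 s = 1) (p : (Fin 2 → ℝ) × (Fin 2 → ℝ)) :
    frame s p *ᵥ s = p.1 := by
  simp only [frame, LinearMap.coe_mk, AddHom.coe_mk, add_mulVec, vecMulVec_mulVec, op_smul_eq_smul,
    dotProduct_self_eq_one hs, perp_dotProduct_s13, one_smul, zero_smul, add_zero]

lemma det_frame {s : Fin 2 → ℝ} (hs : enorm2 s = 1) (p : (Fin 2 → ℝ) × (Fin 2 → ℝ)) :
    (frame s p).det = wedge p.1 p.2 := by
  simp only [frame, LinearMap.coe_mk, AddHom.coe_mk, det_fin_two, Matrix.add_apply, vecMulVec_apply,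
    wedge, perp, cons_val_zero, cons_val_one, cons_val_fin_one]
  linear_combination (p.1 0 * p.2 1 - p.1 1 * p.2 0) * sq_add_sq_of_enorm2_eq_one hs

lemma vecMulVec_self_add_vecMulVec_perp {s : Fin 2 → ℝ} (hs : enorm2 s = 1) :
    vecMulVec s s + vecMulVec (perp s) (perp s) = 1 := by
  have h := sq_add_sq_of_enorm2_eq_one hs
  ext i j; fin_cases i <;> fin_cases j <;> simp [perp, vecMulVec, ← h, sq, mul_comm, add_comm]

lemma frame_mulVec_mulVec_perp {s : Fin 2 → ℝ} (hs : enorm2 s = 1) (F : M2) :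
    frame s (F *ᵥ s, F *ᵥ perp s) = F := by
  change vecMulVec (F *ᵥ s) s + vecMulVec (F *ᵥ perp s) (perp s) = F
  rw [← mul_vecMulVec, ← mul_vecMulVec, ← Matrix.mul_add, vecMulVec_self_add_vecMulVec_perp hs,
    Matrix.mul_one]

lemma image_frame_unitWedgePairs_subset {s : Fin 2 → ℝ} (hs : enorm2 s = 1) :
    frame s '' unitWedgePairs ⊆ calM s := by
  rintro _ ⟨p, ⟨hp1, hp2⟩, rfl⟩
  exact ⟨(det_frame hs p).trans hp2, (congrArg enorm2 (frame_mulVec hs p)).trans hp1⟩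

lemma mem_convexHull_calM_of_enorm2_mulVec_lt_one {s : Fin 2 → ℝ} (hs : enorm2 s = 1) {F : M2}
    (hF : enorm2 (F *ᵥ s) < 1) : F ∈ convexHull ℝ (calM s) := by
  rw [← frame_mulVec_mulVec_perp hs F]
  refine convexHull_mono (image_frame_unitWedgePairs_subset hs) ?_
  rw [← LinearMap.image_convexHull]
  exact mem_image_of_mem _ (mk_mem_convexHull_unitWedgePairs hF _)

def mulVecEuclidean (s : Fin 2 → ℝ) : M2 →ₗ[ℝ] EuclideanSpace ℝ (Fin 2) :=
  (WithLp.linearEquiv 2 ℝ (Fin 2 → ℝ)).symm.toLinearMap ∘ₗ (mulVecBilin ℝ ℝ).flip s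

lemma setOf_enorm2_mulVec_le_eq_preimage (s : Fin 2 → ℝ) :
    {F : M2 | enorm2 (F *ᵥ s) ≤ 1} = mulVecEuclidean s ⁻¹' Metric.closedBall 0 1 := by
  ext F
  rw [mem_preimage, mem_closedBall_zero_iff]
  exact iff_of_eq (congrArg (· ≤ 1) (enorm2_eq_norm _))

lemma convex_setOf_enorm2_mulVec_le (s : Fin 2 → ℝ) :
    Convex ℝ {F : M2 | enorm2 (F *ᵥ s) ≤ 1} := by
  rw [setOf_enorm2_mulVec_le_eq_preimage]
  exact (convex_closedBall 0 1).linear_preimage _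

lemma isClosed_setOf_enorm2_mulVec_le (s : Fin 2 → ℝ) :
    IsClosed {F : M2 | enorm2 (F *ᵥ s) ≤ 1} := by
  rw [setOf_enorm2_mulVec_le_eq_preimage]
  exact Metric.isClosed_closedBall.preimage (LinearMap.continuous_of_finiteDimensional _)

lemma openSegment_zero_subset_setOf_enorm2_mulVec_lt {s : Fin 2 → ℝ} {F : M2}
    (hF : enorm2 (F *ᵥ s) ≤ 1) :
    openSegment ℝ 0 F ⊆ {G : M2 | enorm2 (G *ᵥ s) < 1} := by
  rintro _ ⟨a, b, ha, hb, hab, rfl⟩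
  simp only [smul_zero, zero_add, Set.mem_ofPred_eq, smul_mulVec, enorm2_smul, abs_of_pos hb]
  nlinarith

/-- The closed convex hull of 𝓜_s equals {F : ‖F s‖ ≤ 1}. -/
theorem stmt13 (s : Fin 2 → ℝ) (hs : enorm2 s = 1) :
    closure (convexHull ℝ (calM s)) = {F : M2 | enorm2 (F.mulVec s) ≤ 1} := by
  apply Subset.antisymm
  · exact closure_minimal (convexHull_min (fun F hF ↦ hF.2.le) (convex_setOf_enorm2_mulVec_le s))
      (isClosed_setOf_enorm2_mulVec_le s)
  · intro F hF
    have hseg : openSegment ℝ 0 F ⊆ convexHull ℝ (calM s) := fun G hG ↦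
      mem_convexHull_calM_of_enorm2_mulVec_lt_one hs
        (openSegment_zero_subset_setOf_enorm2_mulVec_lt hF hG)
    exact closure_mono hseg (segment_subset_closure_openSegment (right_mem_segment ℝ 0 F))
end
end
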